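/- Fix η ∈ (0,1/2) and set r_N := 1 − N^{−(1/2+η)}. For all s = t ∈ (0,∞) and all x, y ∈ ℝ² with x ≠ y, lim_{N→∞} ∫_{Ns·r_N}^{Ns} ∏_{j=1,2} P( V(M_j·r/(Ns)) = V'(M_j'·r/(Ns)) ) dr = 0, where M_j := M_N(x_j,s), M_j' := M_N(y_j,s), and the limit is taken along integers N ≥ 16 large enough that M_j ≥ 0 and M_j' ≥ 0 for j = 1,2. -/

import Mathlib

open MeasureTheory Filter Set

noncomputable section

/-- Binomial probability mass at integer index `j`, parameters `(m, p)`: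
`C(m,j) p^j (1-p)^(m-j)`, interpreted as `0` unless `0 ≤ j ≤ m`. -/
def binPMF (m : ℕ) (p : ℝ) (j : ℤ) : ℝ :=
  if 0 ≤ j then (m.choose j.toNat : ℝ) * p ^ j.toNat * (1 - p) ^ (m - j.toNat) else 0

/-- `P(S_m(p) = S'_{m'}(p') + n)` for independent binomial random variables
`S_m(p)` and `S'_{m'}(p')`. -/
def PSS (m m' : ℕ) (p p' : ℝ) (n : ℤ) : ℝ :=
  ∑ k ∈ Finset.range (m' + 1), binPMF m' p' (k : ℤ) * binPMF m p ((k : ℤ) + n)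

/-- Poisson probability mass function with mean `l`. -/
def poisPMF (l : ℝ) (k : ℕ) : ℝ := Real.exp (-l) * l ^ k / (Nat.factorial k)

/-- `P(V(l) = V'(l') + n)` for independent Poisson random variables with
means `l` and `l'`. -/
def PVV (l l' : ℝ) (n : ℤ) : ℝ :=
  ∑' k : ℕ, if 0 ≤ (k : ℤ) + n then poisPMF l' k * poisPMF l ((k : ℤ) + n).toNat else 0

/-- Centered Gaussian density with variance `v`, evaluated at `x`. -/
def gaussD (v x : ℝ) : ℝ := (Real.sqrt (2 * Real.pi * v))⁻¹ * Real.exp (-x ^ 2 / (2 * v))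

/-- Euclidean distance of two points of `ℝ × ℝ` (viewed as `ℝ²`). -/
def enorm2 (a b : ℝ × ℝ) : ℝ := Real.sqrt ((a.1 - b.1) ^ 2 + (a.2 - b.2) ^ 2)

/-- Two-dimensional heat kernel `Q_t(a,b)`. -/
def heatK (t : ℝ) (a b : ℝ × ℝ) : ℝ :=
  (2 * Real.pi * t)⁻¹ * Real.exp (-((a.1 - b.1) ^ 2 + (a.2 - b.2) ^ 2) / (2 * t))

/-- `M_N(u,r) = ⌊N r + N r · u / N^{1/2}⌋`. -/
def Mfl (N : ℕ) (u r : ℝ) : ℤ := ⌊(N : ℝ) * r + (N : ℝ) * r * (u / Real.sqrt N)⌋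

/-- `𝔟^N(x,y;r,s,t) = ∏_{j=1,2} P(S_{M_j}(r/(Ns)) = S'_{M_j'}(r/(Nt)))`. -/
def bUpper (N : ℕ) (x y : ℝ × ℝ) (r s t : ℝ) : ℝ :=
  PSS (Mfl N x.1 s).toNat (Mfl N y.1 t).toNat (r / ((N : ℝ) * s)) (r / ((N : ℝ) * t)) 0 *
  PSS (Mfl N x.2 s).toNat (Mfl N y.2 t).toNat (r / ((N : ℝ) * s)) (r / ((N : ℝ) * t)) 0

/-- `𝔟_N(x,y;r,s,t) = ∏_{j=1,2} N^{1/2} P(S_{M_j}(r/s) = S'_{M_j'}(r/t))`. -/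
def bLower (N : ℕ) (x y : ℝ × ℝ) (r s t : ℝ) : ℝ :=
  (Real.sqrt N * PSS (Mfl N x.1 s).toNat (Mfl N y.1 t).toNat (r / s) (r / t) 0) *
  (Real.sqrt N * PSS (Mfl N x.2 s).toNat (Mfl N y.2 t).toNat (r / s) (r / t) 0)

/-- The primary condition over `[T₀, T₁]` (with parameter `η ∈ (0,1/2)`). -/
def primaryCond (η T0 T1 : ℝ) (x y : ℝ × ℝ) (s t : ℝ) (N : ℕ) : Prop :=
  |x.1| ≤ (N : ℝ) ^ η / 2 ∧ |x.2| ≤ (N : ℝ) ^ η / 2 ∧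
  |y.1| ≤ (N : ℝ) ^ η / 2 ∧ |y.2| ≤ (N : ℝ) ^ η / 2 ∧
  T0 ≤ s ∧ s ≤ t ∧ t ≤ T1 ∧ 16 ≤ N ∧
  1 ≤ ⌊T0 * (N : ℝ) ^ ((1 : ℝ) / 2 - η) / 2⌋

/-- Indicator of `[1, ∞)`. -/
def ind1 (r : ℝ) : ℝ := if 1 ≤ r then 1 else 0

/-! On the window `r ∈ [N s r_N, N s]` every rate `M r / (N s)` is of order `N s`. Since
`P(V(l) = V'(l')) = ∑ₖ P(V'(l') = k) P(V(l) = k) ≤ maxₖ P(V'(l') = k)`, and the Poisson mass is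
maximal at the mode `⌊l'⌋₊`, where Stirling's formula bounds it by `(2π⌊l'⌋₊)^{-1/2}`, the integrand
is `O((N s)^{-1/2})`. The window has length `s N^{1/2-η}`, so the integral is `O(N^{-η})`. -/

open Real

lemma hasSum_poisPMF (l : ℝ) : HasSum (poisPMF l) 1 := by
  have h := (NormedSpace.expSeries_div_hasSum_exp l).mul_left (exp (-l))
  rw [← exp_eq_exp_ℝ, ← exp_add, neg_add_cancel, exp_zero] at h
  unfold poisPMF
  simpa only [mul_div_assoc] using h

lemma poisPMF_nonneg {l : ℝ} (hl : 0 ≤ l) (k : ℕ) : 0 ≤ poisPMF l k := by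
  unfold poisPMF; positivity

lemma poisPMF_succ (l : ℝ) (k : ℕ) : poisPMF l (k + 1) = poisPMF l k * (l / (k + 1)) := by
  simp only [poisPMF, Nat.factorial_succ, pow_succ, Nat.cast_mul, Nat.cast_succ]
  field_simp

/-- The ratio `l / (k + 1)` of consecutive masses puts the mode at `⌊l⌋₊`. -/
lemma poisPMF_le_poisPMF_floor {l : ℝ} (hl : 0 ≤ l) (k : ℕ) : poisPMF l k ≤ poisPMF l ⌊l⌋₊ := by
  rcases le_total k ⌊l⌋₊ with hk | hk
  · refine monotoneOn_of_le_succ ordConnected_Iic (fun n _ _ hn => ?_) hk self_mem_Iic hk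
    have hn : (n : ℝ) + 1 ≤ l := by
      exact_mod_cast (Nat.le_floor_iff hl).1 (Order.succ_eq_add_one n ▸ hn)
    rw [Order.succ_eq_add_one, poisPMF_succ]
    exact le_mul_of_one_le_right (poisPMF_nonneg hl n) ((one_le_div (by positivity)).2 hn)
  · refine antitoneOn_nat_Ici_of_succ_le (fun n hn => ?_) self_mem_Ici hk hk
    have hn : l ≤ (n : ℝ) + 1 :=
      (Nat.lt_floor_add_one l).le.trans (by exact_mod_cast Nat.succ_le_succ hn)
    rw [poisPMF_succ]
    exact mul_le_of_le_one_right (poisPMF_nonneg hl n) ((div_le_one (by positivity)).2 hn)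

/-- `l ↦ e^{-l} l^k` is maximal at `l = k`; apply `x ≤ e^{x-1}` at `x = l / k`. -/
lemma exp_neg_mul_pow_le {l : ℝ} (hl : 0 ≤ l) (k : ℕ) : exp (-l) * l ^ k ≤ (k / exp 1) ^ k := by
  rcases Nat.eq_zero_or_pos k with rfl | hk
  · simpa using exp_le_one_iff.2 (neg_nonpos.2 hl)
  have hk' : (0 : ℝ) < k := by exact_mod_cast hk
  have h : (l / k) ^ k ≤ exp (l - k) := by
    calc (l / k) ^ k ≤ exp (l / k - 1) ^ k := by
          gcongr; linarith [add_one_le_exp (l / k - 1)]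
      _ = exp (l - k) := by rw [← exp_nat_mul]; congr 1; field_simp
  calc exp (-l) * l ^ k = exp (-l) * k ^ k * (l / k) ^ k := by
        rw [div_pow]; field_simp
    _ ≤ exp (-l) * k ^ k * exp (l - k) := by gcongr
    _ = (k / exp 1) ^ k := by
        rw [mul_right_comm, ← exp_add, show -l + (l - k) = -(k : ℝ) by ring, exp_neg, div_pow,
          ← exp_nat_mul, mul_one]
        ring

lemma poisPMF_le_inv_sqrt {l : ℝ} (hl : 0 ≤ l) {k : ℕ} (hk : k ≠ 0) :
    poisPMF l k ≤ (√(2 * π * k))⁻¹ := by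
  have hpos : 0 < (k / exp 1 : ℝ) ^ k := by positivity
  calc poisPMF l k ≤ (k / exp 1) ^ k / (√(2 * π * k) * (k / exp 1) ^ k) := by
        unfold poisPMF
        exact div_le_div₀ hpos.le (exp_neg_mul_pow_le hl k) (by positivity)
          (Stirling.le_factorial_stirling k)
    _ = (√(2 * π * k))⁻¹ := by field_simp

lemma poisPMF_le_inv_sqrt_pi_mul {l : ℝ} (hl : 1 ≤ l) (k : ℕ) : poisPMF l k ≤ (√(π * l))⁻¹ := by
  have hm : 1 ≤ ⌊l⌋₊ := Nat.one_le_floor_iff l |>.2 hl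
  have hlm : l ≤ 2 * ⌊l⌋₊ := by
    linarith [Nat.lt_floor_add_one l, (Nat.one_le_cast (α := ℝ)).2 hm]
  calc poisPMF l k ≤ poisPMF l ⌊l⌋₊ := poisPMF_le_poisPMF_floor (by linarith) k
    _ ≤ (√(2 * π * ⌊l⌋₊))⁻¹ := poisPMF_le_inv_sqrt (by linarith) (by omega)
    _ ≤ (√(π * l))⁻¹ := by
        apply inv_anti₀ (by positivity)
        apply sqrt_le_sqrt
        nlinarith [pi_pos]

lemma PVV_zero_eq (l l' : ℝ) : PVV l l' 0 = ∑' k : ℕ, poisPMF l' k * poisPMF l k := by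
  simp [PVV]

lemma PVV_zero_nonneg {l l' : ℝ} (hl : 0 ≤ l) (hl' : 0 ≤ l') : 0 ≤ PVV l l' 0 := by
  rw [PVV_zero_eq]
  exact tsum_nonneg fun k => mul_nonneg (poisPMF_nonneg hl' k) (poisPMF_nonneg hl k)

lemma PVV_zero_le_of_poisPMF_le {l l' c : ℝ} (hl : 0 ≤ l) (hl' : 0 ≤ l')
    (hc : ∀ k, poisPMF l' k ≤ c) : PVV l l' 0 ≤ c := by
  have hle : ∀ k, poisPMF l' k * poisPMF l k ≤ c * poisPMF l k :=
    fun k => mul_le_mul_of_nonneg_right (hc k) (poisPMF_nonneg hl k)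
  have hsum := (hasSum_poisPMF l).mul_left c
  rw [mul_one] at hsum
  rw [PVV_zero_eq, ← hsum.tsum_eq]
  exact (Summable.of_nonneg_of_le (fun k => mul_nonneg (poisPMF_nonneg hl' k)
    (poisPMF_nonneg hl k)) hle hsum.summable).tsum_le_tsum hle hsum.summable

lemma PVV_zero_le_one {l l' : ℝ} (hl : 0 ≤ l) (hl' : 0 ≤ l') : PVV l l' 0 ≤ 1 := by
  refine PVV_zero_le_of_poisPMF_le hl hl' fun k => ?_
  simpa [(hasSum_poisPMF l').tsum_eq] using
    (hasSum_poisPMF l').summable.le_tsum k fun j _ => poisPMF_nonneg hl' j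

lemma eventually_mul_div_four_le_Mfl (u : ℝ) {s : ℝ} (hs : 0 < s) :
    ∀ᶠ N : ℕ in atTop, (N : ℝ) * s / 4 ≤ Mfl N u s := by
  have hN := tendsto_natCast_atTop_atTop (R := ℝ)
  filter_upwards [(tendsto_sqrt_atTop.comp hN).eventually_ge_atTop (2 * |u|),
    hN.eventually_ge_atTop (4 / s), hN.eventually_gt_atTop 0] with N hu hNs hN0
  have hu : -(1 / 2 : ℝ) ≤ u / √N := by
    rw [le_div_iff₀ (sqrt_pos.2 hN0)]
    linarith [neg_abs_le u, show 2 * |u| ≤ √N from hu]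
  have h4 : 4 ≤ (N : ℝ) * s := (div_le_iff₀ hs).1 hNs
  calc (N : ℝ) * s / 4 ≤ N * s + N * s * (u / √N) - 1 := by nlinarith
    _ ≤ Mfl N u s := (Int.sub_one_lt_floor _).le

lemma abs_PVV_mul_PVV_le {a r M₁ M₁' M₂ M₂' : ℝ} (ha : 8 ≤ a) (hr : a / 2 ≤ r)
    (h₁ : a / 4 ≤ M₁) (h₁' : a / 4 ≤ M₁') (h₂ : a / 4 ≤ M₂) (h₂' : a / 4 ≤ M₂') :
    |PVV (M₁ * r / a) (M₁' * r / a) 0 * PVV (M₂ * r / a) (M₂' * r / a) 0| ≤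
      (√(π * (a / 8)))⁻¹ := by
  have hmean : ∀ {M}, a / 4 ≤ M → a / 8 ≤ M * r / a := fun hM => by
    rw [le_div_iff₀ (by linarith)]
    nlinarith
  have hpos : ∀ {M}, a / 4 ≤ M → 0 ≤ M * r / a := fun hM => (hmean hM).trans' (by linarith)
  have hl₁ := hpos h₁
  have hl₁' := hpos h₁'
  have hl₂ := hpos h₂
  have hl₂' := hpos h₂'
  have hP₁ : PVV (M₁ * r / a) (M₁' * r / a) 0 ≤ (√(π * (a / 8)))⁻¹ := by
    refine PVV_zero_le_of_poisPMF_le hl₁ hl₁' fun k => ?_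
    refine (poisPMF_le_inv_sqrt_pi_mul ((hmean h₁').trans' (by linarith)) k).trans ?_
    apply inv_anti₀ (by positivity)
    exact sqrt_le_sqrt (by nlinarith [pi_pos, hmean h₁'])
  rw [abs_of_nonneg (mul_nonneg (PVV_zero_nonneg hl₁ hl₁') (PVV_zero_nonneg hl₂ hl₂'))]
  exact (mul_le_of_le_one_right (PVV_zero_nonneg hl₁ hl₁') (PVV_zero_le_one hl₂ hl₂')).trans hP₁

lemma tendsto_inv_sqrt_mul_rpow {η s : ℝ} (hη : 0 < η) (hs : 0 < s) :
    Tendsto (fun t : ℝ => (√(π * (t * s / 8)))⁻¹ * (t * s * t ^ (-(1 / 2 + η)))) atTop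
      (nhds 0) := by
  have key : ∀ t > (0 : ℝ), s / √(π * s / 8) * t ^ (-η) =
      (√(π * (t * s / 8)))⁻¹ * (t * s * t ^ (-(1 / 2 + η))) := by
    intro t ht
    have ht' := sq_sqrt ht.le
    rw [show π * (t * s / 8) = π * s / 8 * t by ring, sqrt_mul (by positivity), neg_add,
      rpow_add ht, rpow_neg ht.le (1 / 2), ← sqrt_eq_rpow]
    have : 0 < √t := sqrt_pos.2 ht
    field_simp
    rw [ht']
  have h := (tendsto_rpow_neg_atTop hη).const_mul (s / √(π * s / 8))
  rw [mul_zero] at h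
  exact h.congr' ((eventually_gt_atTop 0).mono key)

theorem stmt8_general (η : ℝ) (hη : 0 < η) (s : ℝ) (hs : 0 < s)
    (x y : ℝ × ℝ) :
    Tendsto
      (fun N : ℕ =>
        ∫ r in ((N : ℝ) * s * (1 - (N : ℝ) ^ (-(1 / 2 + η))))..((N : ℝ) * s),
          PVV (((Mfl N x.1 s : ℤ) : ℝ) * r / ((N : ℝ) * s))
              (((Mfl N y.1 s : ℤ) : ℝ) * r / ((N : ℝ) * s)) 0 *
            PVV (((Mfl N x.2 s : ℤ) : ℝ) * r / ((N : ℝ) * s))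
                (((Mfl N y.2 s : ℤ) : ℝ) * r / ((N : ℝ) * s)) 0)
      atTop (nhds 0) := by
  have hN := tendsto_natCast_atTop_atTop (R := ℝ)
  have hε : Tendsto (fun N : ℕ => (N : ℝ) ^ (-(1 / 2 + η))) atTop (nhds 0) :=
    (tendsto_rpow_neg_atTop (by linarith)).comp hN
  refine squeeze_zero_norm' ?_ ((tendsto_inv_sqrt_mul_rpow hη hs).comp hN)
  filter_upwards [eventually_mul_div_four_le_Mfl x.1 hs, eventually_mul_div_four_le_Mfl y.1 hs,
    eventually_mul_div_four_le_Mfl x.2 hs, eventually_mul_div_four_le_Mfl y.2 hs,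
    hN.eventually_ge_atTop (8 / s), hε.eventually (eventually_le_nhds one_half_pos)]
    with N hx₁ hy₁ hx₂ hy₂ hNs hεN
  have ha : 8 ≤ (N : ℝ) * s := (div_le_iff₀ hs).1 hNs
  have hεnn : 0 ≤ (N : ℝ) ^ (-(1 / 2 + η)) := by positivity
  refine (intervalIntegral.norm_integral_le_of_norm_le_const
    (C := (√(π * (N * s / 8)))⁻¹) fun r hr => ?_).trans_eq ?_
  · rw [uIoc_of_le (by nlinarith)] at hr
    exact abs_PVV_mul_PVV_le ha (by nlinarith [hr.1]) hx₁ hy₁ hx₂ hy₂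
  · rw [show (N : ℝ) * s - N * s * (1 - N ^ (-(1 / 2 + η))) = N * s * N ^ (-(1 / 2 + η)) by ring,
      abs_of_nonneg (by positivity)]
    rfl

theorem stmt8 (η : ℝ) (hη : 0 < η) (hη' : η < 1 / 2) (s : ℝ) (hs : 0 < s)
    (x y : ℝ × ℝ) (hxy : x ≠ y) :
    Tendsto
      (fun N : ℕ =>
        ∫ r in ((N : ℝ) * s * (1 - (N : ℝ) ^ (-(1 / 2 + η))))..((N : ℝ) * s),
          PVV (((Mfl N x.1 s : ℤ) : ℝ) * r / ((N : ℝ) * s))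
              (((Mfl N y.1 s : ℤ) : ℝ) * r / ((N : ℝ) * s)) 0 *
            PVV (((Mfl N x.2 s : ℤ) : ℝ) * r / ((N : ℝ) * s))
                (((Mfl N y.2 s : ℤ) : ℝ) * r / ((N : ℝ) * s)) 0)
      atTop (nhds 0) :=
  stmt8_general η hη s hs x y
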